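/- The diagonal entries of the covariance matrix V^P := ∑_{ẽ∈Ẽ} q̄_{ẽ} (ψ * δ^{ẽ} * ψ * S q + ψ * S δ^{ẽ})^{⊗2} − ∑_{ĩ∈E} μ_{ĩĩ} (ψ * q^{ĩ} * ψ * S q + ψ * S q^{ĩ})^{⊗2} are given, for e = (i,j,k) ∈ Ẽ, by V^P_{ee} = ∑_{ĩ∈E} μ_{ĩĩ} { ∑_{j̃∈E} [ (C^{ij}_{ĩj̃} − 1{ĩ=j} Ψ_{ij})² * q_{ĩj̃} ](k) − [ ∑_{j̃∈E} C^{ij}_{ĩj̃} * q_{ĩj̃} − 1{ĩ=j} ψ_{ij} * H_j ]²(k) }, where Ψ_{ij}(k) := ∑_{k'≤k} ψ_{ij}(k'), H_j(k) := ∑_{j'∈E}∑_{k'≤k} q_{jj'}(k') and C^{ij}_{ĩj̃} := ψ_{iĩ} * ψ_{j̃j} * (1 − H_j). -/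

import Mathlib

open MeasureTheory Filter Topology Finset ProbabilityTheory

noncomputable section

namespace SMCPaper

variable {E : Type} [Fintype E] [DecidableEq E] {Ω : Type} [MeasurableSpace Ω]

/-- `q` is a (discrete-time) semi-Markov kernel on the finite state space `E`:
nonnegative entries, `q i j 0 = 0`, and total mass `1` from every state. -/
def IsSemiMarkovKernel (q : E → E → ℕ → ℝ) : Prop :=
  (∀ i j k, 0 ≤ q i j k) ∧ (∀ i j, q i j 0 = 0) ∧
    ∀ i, HasSum (fun p : E × ℕ => q i p.1 p.2) 1

/-- The sojourn times `X n = S n − S (n−1)` (so `X 0 = 0` when `S 0 = 0`). -/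
def Xproc (S : ℕ → Ω → ℕ) (n : ℕ) (ω : Ω) : ℕ := S n ω - S (n - 1) ω

/-- `(J, S)` is a Markov renewal chain with semi-Markov kernel `q` under the family of
probability measures `P i₀` (the chain starting at `i₀`):  `J 0 = i₀`, `S 0 = 0` a.s., and
the process `(J, X)` is a time-homogeneous Markov chain with transitions
`P(J_{n+1} = j, X_{n+1} = k | J_n = i, past) = q i j k`. -/
def IsMarkovRenewalChain (P : E → Measure Ω) (J : ℕ → Ω → E) (S : ℕ → Ω → ℕ)
    (q : E → E → ℕ → ℝ) : Prop :=
  (∀ i, IsProbabilityMeasure (P i)) ∧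
  (∀ n i, MeasurableSet {ω | J n ω = i}) ∧
  (∀ n k, MeasurableSet {ω | S n ω = k}) ∧
  (∀ i₀, P i₀ {ω | J 0 ω = i₀ ∧ S 0 ω = 0} = 1) ∧
  (∀ i₀ (n : ℕ) (js : ℕ → E) (xs : ℕ → ℕ),
    P i₀ ({ω | J (n+1) ω = js (n+1) ∧ Xproc S (n+1) ω = xs (n+1)} ∩
        {ω | ∀ l ≤ n, J l ω = js l ∧ Xproc S l ω = xs l}) =
      ENNReal.ofReal (q (js n) (js (n+1)) (xs (n+1))) *
        P i₀ {ω | ∀ l ≤ n, J l ω = js l ∧ Xproc S l ω = xs l})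

/-- First hitting time (after time `0`) of the state `j` by the embedded chain `J`. -/
def tau (J : ℕ → Ω → E) (j : E) (ω : Ω) : ℕ := sInf {n | 1 ≤ n ∧ J n ω = j}

/-- Mean recurrence time `μ_{ii} = E_i[S_{τ_i}]`. -/
def mrt (P : E → Measure Ω) (J : ℕ → Ω → E) (S : ℕ → Ω → ℕ) (i : E) : ℝ :=
  ∫ ω, (S (tau J i ω) ω : ℝ) ∂(P i)

/-- Assumption (A): irreducibility of the embedded chain, aperiodicity of the Markov
renewal chain, and positive recurrence. -/
def AssumptionA (P : E → Measure Ω) (J : ℕ → Ω → E) (S : ℕ → Ω → ℕ) : Prop :=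
  (∀ i j : E, 0 < P i {ω | ∃ n, 1 ≤ n ∧ J n ω = j}) ∧
  (∀ i : E, ∀ d : ℕ,
      (∀ k, 0 < P i {ω | S (tau J i ω) ω = k} → d ∣ k) → d = 1) ∧
  (∀ i : E, (∀ᵐ ω ∂(P i), ∃ n, 1 ≤ n ∧ J n ω = i) ∧
      Integrable (fun ω => (S (tau J i ω) ω : ℝ)) (P i))

/-- `N(M)`: the number of jumps of the Markov renewal chain up to time `M`. -/
def Ncnt (S : ℕ → Ω → ℕ) (M : ℕ) (ω : Ω) : ℕ := sSup {n | S n ω ≤ M}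

/-- `N_i(M)`: the number of visits of the embedded chain to `i` before time `M`. -/
def Nvis (J : ℕ → Ω → E) (S : ℕ → Ω → ℕ) (i : E) (M : ℕ) (ω : Ω) : ℕ :=
  ∑ n ∈ Finset.Icc 1 (Ncnt S M ω), if J (n-1) ω = i then 1 else 0

/-- The empirical (nonparametric) estimator `q̂(M)` of the semi-Markov kernel. -/
def qhat (J : ℕ → Ω → E) (S : ℕ → Ω → ℕ) (M : ℕ) (ω : Ω) (i j : E) (k : ℕ) : ℝ :=
  (∑ n ∈ Finset.Icc 1 (Ncnt S M ω),
      if J (n-1) ω = i ∧ J n ω = j ∧ Xproc S n ω = k then (1:ℝ) else 0) /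
    (Nvis J S i M ω : ℝ)

/-- The entry of a matrix sequence at `e = (i, j, k)`. -/
def entry (A : E → E → ℕ → ℝ) (e : E × E × ℕ) : ℝ := A e.1 e.2.1 e.2.2

/-- Matrix convolution of matrix sequences. -/
def mconv (A B : E → E → ℕ → ℝ) : E → E → ℕ → ℝ := fun i j k =>
  ∑ l ∈ Finset.range (k+1), ∑ u, A i u l * B u j (k - l)

/-- Convolution of scalar sequences. -/
def sconv (a b : ℕ → ℝ) : ℕ → ℝ := fun k => ∑ l ∈ Finset.range (k+1), a l * b (k - l)

/-- The identity `δI` for matrix convolution. -/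
def deltaI : E → E → ℕ → ℝ := fun i j k => if i = j ∧ k = 0 then 1 else 0

/-- `n`-fold matrix convolution power. -/
def mpow (A : E → E → ℕ → ℝ) : ℕ → E → E → ℕ → ℝ
  | 0 => deltaI
  | n + 1 => mconv A (mpow A n)

/-- The convolution inverse `(δI − A)^{(−1)} = ∑_{n ≥ 0} A^{(n)}`. -/
def psiOf (A : E → E → ℕ → ℝ) : E → E → ℕ → ℝ := fun i j k => ∑' n, mpow A n i j k

/-- The operator `S`: `(S A)_{ij}(k) = 1{i=j} ∑_{j'} ∑_{k' > k} A_{ij'}(k')`. -/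
def Sop (A : E → E → ℕ → ℝ) : E → E → ℕ → ℝ := fun i j k =>
  if i = j then ∑' p : E × ℕ, if k < p.2 then A i p.1 p.2 else 0 else 0

/-- Cumulative sum of a scalar sequence, `(cumul a) k = ∑_{l ≤ k} a l`. -/
def cumul (a : ℕ → ℝ) (k : ℕ) : ℝ := ∑ l ∈ Finset.range (k+1), a l

/-- `H_j(k) = ∑_{j'} ∑_{k' ≤ k} q_{jj'}(k')`, the sojourn time c.d.f. in state `j`. -/
def Hseq (q : E → E → ℕ → ℝ) (j : E) (k : ℕ) : ℝ :=
  ∑ j', ∑ l ∈ Finset.range (k+1), q j j' l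

/-- The matrix sequence `δ^{et}` with entry `1` at `et` and `0` elsewhere. -/
def deltaM (et : E × E × ℕ) : E → E → ℕ → ℝ := fun i j k => if (i, j, k) = et then 1 else 0

/-- The matrix sequence `q^{it}` with `q^{it}_{ij}(k) = 1{i = it} q_{ij}(k)`. -/
def qres (q : E → E → ℕ → ℝ) (it : E) : E → E → ℕ → ℝ :=
  fun i j k => if i = it then q i j k else 0

/-- The semi-Markov chain `Z_k = J_{N(k)}` associated to `(J, S)`. -/
def Zproc (J : ℕ → Ω → E) (S : ℕ → Ω → ℕ) (k : ℕ) (ω : Ω) : E := J (Ncnt S k ω) ω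

/-- The distribution matrix sequence `P_{ij}(k) = P_i(Z_k = j)` of the semi-Markov chain. -/
def Pdist (P : E → Measure Ω) (J : ℕ → Ω → E) (S : ℕ → Ω → ℕ) (i j : E) (k : ℕ) : ℝ :=
  (P i {ω | Zproc J S k ω = j}).toReal

/-- The estimator `P̂(M) = ψ̂(M) * S q̂(M)` of the distribution matrix sequence. -/
def Phat (J : ℕ → Ω → E) (S : ℕ → Ω → ℕ) (M : ℕ) (ω : Ω) : E → E → ℕ → ℝ :=
  mconv (psiOf (qhat J S M ω)) (Sop (qhat J S M ω))

/-- The reliability vector sequence `R_i(k) = P_i(T_D > k)`, for `i ∈ U`,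
where `D = Uᶜ` and `T_D` is the first entrance time of `Z` into `D`. -/
def Rrel (P : E → Measure Ω) (J : ℕ → Ω → E) (S : ℕ → Ω → ℕ) (U : Finset E)
    (i : E) (k : ℕ) : ℝ :=
  (P i {ω | ∀ l ≤ k, Zproc J S l ω ∈ U}).toReal

/-- Restriction of a matrix sequence to `Ũ = U × U × ℕ` (extended by `0`). -/
def restrictUU (U : Finset E) (A : E → E → ℕ → ℝ) : E → E → ℕ → ℝ :=
  fun i j k => if i ∈ U ∧ j ∈ U then A i j k else 0

/-- Convolution of a matrix sequence with a vector sequence. -/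
def mvconv (A : E → E → ℕ → ℝ) (v : E → ℕ → ℝ) : E → ℕ → ℝ := fun i k =>
  ∑ l ∈ Finset.range (k+1), ∑ u, A i u l * v u (k - l)

/-- The diagonal `(A)_U` of a matrix sequence, as a vector sequence. -/
def diagOf (A : E → E → ℕ → ℝ) : E → ℕ → ℝ := fun i k => A i i k

/-- The estimator `R̂(M) = ψ̂_UU(M) * (S q̂(M))_U` of the reliability vector sequence. -/
def Rhat (J : ℕ → Ω → E) (S : ℕ → Ω → ℕ) (U : Finset E) (M : ℕ) (ω : Ω) : E → ℕ → ℝ :=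
  mvconv (psiOf (restrictUU U (qhat J S M ω))) (diagOf (Sop (qhat J S M ω)))

/-- `μG` is the law of a centered Gaussian family indexed by `ι` with covariance `V`:
every finite linear combination of coordinates has a centered normal distribution with the
appropriate variance. -/
def IsCenteredGaussianLaw {ι : Type} (μG : Measure (ι → ℝ)) (V : ι → ι → ℝ) : Prop :=
  ∀ a : ι →₀ ℝ,
    Measure.map (fun x => ∑ e ∈ a.support, a e * x e) μG =
      gaussianReal 0
        (Real.toNNReal (∑ e ∈ a.support, ∑ e' ∈ a.support, a e * V e e' * a e'))

/-- `(Z_e)_{e ∈ ι}` is a centered Gaussian family with covariance `V` under `P`. -/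
def IsCenteredGaussianFamily {ι : Type} (P : Measure Ω) (Z : ι → Ω → ℝ)
    (V : ι → ι → ℝ) : Prop :=
  (∀ e, Measurable (Z e)) ∧
  ∀ a : ι →₀ ℝ,
    Measure.map (fun ω => ∑ e ∈ a.support, a e * Z e ω) P =
      gaussianReal 0
        (Real.toNNReal (∑ e ∈ a.support, ∑ e' ∈ a.support, a e * V e e' * a e'))

/-- The covariance matrix `V^q` of the CLT for `q̂`, with `μr i = μ_{ii}`. -/
def Vq (q : E → E → ℕ → ℝ) (μr : E → ℝ) : (E × E × ℕ) → (E × E × ℕ) → ℝ := fun e e' =>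
  μr e.1 * (if e.1 = e'.1 then 1 else 0) * entry q e *
    ((if e.2.1 = e'.2.1 ∧ e.2.2 = e'.2.2 then 1 else 0) - entry q e')


/-- `ψ * δ^{et} * ψ * S q + ψ * S δ^{et}`. -/
def FPm (q : E → E → ℕ → ℝ) (et : E × E × ℕ) : E → E → ℕ → ℝ := fun i j k =>
  mconv (mconv (mconv (psiOf q) (deltaM et)) (psiOf q)) (Sop q) i j k +
    mconv (psiOf q) (Sop (deltaM et)) i j k

/-- `ψ * q^{it} * ψ * S q + ψ * S q^{it}`. -/
def GPm (q : E → E → ℕ → ℝ) (it : E) : E → E → ℕ → ℝ := fun i j k =>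
  mconv (mconv (mconv (psiOf q) (qres q it)) (psiOf q)) (Sop q) i j k +
    mconv (psiOf q) (Sop (qres q it)) i j k

/-- The asymptotic covariance matrix `V^P` for the estimator of the distribution
matrix sequence. -/
def VP (q : E → E → ℕ → ℝ) (μr : E → ℝ) : (E × E × ℕ) → (E × E × ℕ) → ℝ := fun e e' =>
  (∑' et : E × E × ℕ,
      μr et.1 * entry q et * (entry (FPm q et) e * entry (FPm q et) e')) -
    ∑ it, μr it * (entry (GPm q it) e * entry (GPm q it) e')

/-- `C^{ij}_{ĩ j̃} = ψ_{i ĩ} * ψ_{j̃ j} * (1 − H_j)`. -/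
def Cseq (q : E → E → ℕ → ℝ) (i j it jt : E) : ℕ → ℝ :=
  sconv (sconv (psiOf q i it) (psiOf q jt j)) (fun k => 1 - Hseq q j k)

/-- The asymptotic variance `v^P(i,j,k)` for the estimator of the distribution
matrix sequence. -/
def vP (q : E → E → ℕ → ℝ) (μr : E → ℝ) (i j : E) (k : ℕ) : ℝ :=
  ∑ it, μr it *
    ((∑ jt, sconv
        (fun l => (Cseq q i j it jt l - (if it = j then 1 else 0) * cumul (psiOf q i j) l)^2)
        (q it jt) k) -
     (∑ jt, sconv (Cseq q i j it jt) (q it jt) k -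
        (if it = j then 1 else 0) * sconv (psiOf q i j) (Hseq q j) k)^2)

/-!
Sequences on `ℕ` are encoded as formal power series, so that convolution becomes multiplication
and `S q`, `δ^{ẽ}`, `S δ^{ẽ}`, `q^{ĩ}` become explicit series. For `e = (i, j, k)` and
`ẽ = (ĩ, j̃, k̃)` this gives `(ψ * δ^{ẽ} * ψ * S q + ψ * S δ^{ẽ})_e = D_{ĩj̃}(k − k̃) + b_ĩ`, with
`D_{ĩj̃} = C^{ij}_{ĩj̃} − 1{ĩ=j} Ψ_{ij}` and `b_ĩ = 1{ĩ=j} Ψ_{ij}(k)`, while the entry built from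
`q^{ĩ}` is the `q_{ĩ·}`-average `∑_{j̃} (q_{ĩj̃} * D_{ĩj̃})(k) + b_ĩ` of these. So, row by row,
`V^P_{ee}` is `μ_{ĩĩ}` times the variance of `D + b` under the probability `q_{ĩ·}(·)`, and the
shift `b_ĩ` drops out.
-/

open PowerSeries

theorem mk_sconv (a b : ℕ → ℝ) : mk (sconv a b) = mk a * mk b := by
  ext k
  rw [coeff_mk, coeff_mul, Finset.Nat.sum_antidiagonal_eq_sum_range_succ_mk]
  simp [sconv]

theorem sconv_eq_coeff (a b : ℕ → ℝ) (k : ℕ) : sconv a b k = coeff k (mk a * mk b) := by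
  rw [← mk_sconv, coeff_mk]

theorem sconv_comm (a b : ℕ → ℝ) : sconv a b = sconv b a := by
  funext k
  rw [sconv_eq_coeff, sconv_eq_coeff, mul_comm]

theorem mk_cumul (a : ℕ → ℝ) : mk (cumul a) = mk a * (mk 1 : ℝ⟦X⟧) := by
  rw [← mk_sconv]
  congr
  funext k
  simp [cumul, sconv]

theorem mk_indicator_lt (n : ℕ) :
    mk (fun m => if m < n then (1 : ℝ) else 0) = (mk 1 : ℝ⟦X⟧) * (1 - X ^ n) := by
  ext m
  rw [coeff_mk, mul_sub, mul_one, map_sub, mul_comm, coeff_X_pow_mul', coeff_mk]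
  split_ifs <;> simp <;> omega

theorem hasSum_mul_ite_le (c d : ℕ → ℝ) (k : ℕ) :
    HasSum (fun m => c m * if m ≤ k then d (k - m) else 0) (sconv c d k) := by
  have hfin := hasSum_sum_of_ne_finset_zero (L := .unconditional ℕ) (s := Finset.range (k + 1))
    (f := fun m => c m * if m ≤ k then d (k - m) else 0) fun m hm => by
      rw [if_neg (by simpa [Nat.lt_succ_iff] using hm), mul_zero]
  convert hfin using 1
  exact Finset.sum_congr rfl fun m hm => by
    rw [if_pos (Nat.lt_succ_iff.mp (Finset.mem_range.mp hm))]

theorem hasSum_prod_of_fintype {α β γ : Type*} [AddCommMonoid α] [TopologicalSpace α]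
    [ContinuousAdd α] [Fintype β] [DecidableEq β] {f : β × γ → α} {g : β → α}
    (hf : ∀ b, HasSum (fun c => f (b, c)) (g b)) : HasSum f (∑ b, g b) := by
  have hrow : ∀ b, HasSum (fun x : β × γ => if x.1 = b then f x else 0) (g b) := fun b => by
    refine ((Prod.mk_right_injective b).hasSum_iff fun x hx => ?_).mp ?_
    · rw [if_neg]
      rintro rfl
      exact hx ⟨x.2, rfl⟩
    · simpa [Function.comp_def] using hf b
  simpa [Finset.sum_ite_eq'] using hasSum_sum (s := Finset.univ) fun b _ => hrow b

theorem hasSum_mul_add_sq {α : Type*} {p f : α → ℝ} {m s : ℝ} (hp : HasSum p 1)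
    (hm : HasSum (fun x => p x * f x) m) (hs : HasSum (fun x => p x * f x ^ 2) s) (b : ℝ) :
    HasSum (fun x => p x * (f x + b) ^ 2) (s + 2 * b * m + b ^ 2) := by
  convert (hs.add (hm.mul_left (2 * b))).add (hp.mul_left (b ^ 2)) using 1
  · funext x
    ring
  · ring

section Kernel

variable {q : E → E → ℕ → ℝ}

theorem IsSemiMarkovKernel.hasSum_tail (hq : IsSemiMarkovKernel q) (u : E) (m : ℕ) :
    HasSum (fun p : E × ℕ => if m < p.2 then q u p.1 p.2 else 0) (1 - Hseq q u m) := by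
  have hhead : HasSum (fun p : E × ℕ => if m < p.2 then 0 else q u p.1 p.2) (Hseq q u m) := by
    refine hasSum_prod_of_fintype fun j' => ?_
    convert hasSum_sum_of_ne_finset_zero (L := .unconditional ℕ) (s := Finset.range (m + 1))
      (f := fun l => if m < l then 0 else q u j' l) fun l hl => if_pos (by simpa using hl) using 1
    exact Finset.sum_congr rfl fun l hl => (if_neg (by simpa [Nat.lt_succ_iff] using hl)).symm
  refine ((hq.2.2 u).sub hhead).congr_fun fun p => ?_
  split_ifs <;> simp

theorem IsSemiMarkovKernel.Sop_eq (hq : IsSemiMarkovKernel q) (u v : E) (m : ℕ) :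
    Sop q u v m = if u = v then 1 - Hseq q u m else 0 := by
  unfold Sop
  split_ifs
  · exact (hq.hasSum_tail u m).tsum_eq
  · rfl

omit [DecidableEq E] in
theorem mk_mconv (A B : E → E → ℕ → ℝ) (i j : E) :
    mk (mconv A B i j) = ∑ u, mk (A i u) * mk (B u j) := by
  ext k
  simp only [coeff_mk, map_sum, ← sconv_eq_coeff, sconv, mconv]
  exact Finset.sum_comm

omit [DecidableEq E] in
theorem mk_Hseq (q : E → E → ℕ → ℝ) (j : E) :
    mk (Hseq q j) = (∑ v, mk (q j v)) * (mk 1 : ℝ⟦X⟧) := by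
  simp only [Finset.sum_mul, ← mk_cumul]
  ext k
  simp [Hseq, cumul]

omit [DecidableEq E] in
theorem mk_one_sub_Hseq (q : E → E → ℕ → ℝ) (j : E) :
    mk (fun k => 1 - Hseq q j k) = (mk 1 : ℝ⟦X⟧) * (1 - ∑ v, mk (q j v)) := by
  rw [mul_sub, mul_one, mul_comm, ← mk_Hseq]
  ext k
  simp

theorem IsSemiMarkovKernel.mk_Sop (hq : IsSemiMarkovKernel q) (u v : E) :
    mk (Sop q u v) = if u = v then (mk 1 : ℝ⟦X⟧) * (1 - ∑ w, mk (q u w)) else 0 := by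
  rw [← mk_one_sub_Hseq]
  ext m
  rw [coeff_mk, hq.Sop_eq]
  split_ifs <;> simp

omit [Fintype E] in
theorem mk_Sop_qres (it u v : E) :
    mk (Sop (qres q it) u v) = if u = it then mk (Sop q u v) else 0 := by
  ext m
  unfold Sop qres
  split_ifs <;> simp_all

omit [Fintype E] in
theorem mk_qres (it u v : E) : mk (qres q it u v) = if u = it then mk (q u v) else 0 := by
  ext m
  unfold qres
  split_ifs <;> simp_all

omit [Fintype E] in
theorem mk_deltaM (i₁ j₁ : E) (k₁ : ℕ) (u v : E) :
    mk (deltaM (i₁, j₁, k₁) u v) = if u = i₁ ∧ v = j₁ then (X ^ k₁ : ℝ⟦X⟧) else 0 := by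
  ext m
  simp only [deltaM, coeff_mk, Prod.mk.injEq]
  split_ifs <;> simp_all

omit [Fintype E] in
theorem Sop_deltaM (i₁ j₁ : E) (k₁ : ℕ) (u v : E) (m : ℕ) :
    Sop (deltaM (i₁, j₁, k₁)) u v m =
      if u = v ∧ u = i₁ then (if m < k₁ then 1 else 0) else 0 := by
  unfold Sop deltaM
  by_cases huv : u = v
  · subst huv
    have hpoint : (fun p : E × ℕ => if m < p.2 then
          (if (u, p.1, p.2) = (i₁, j₁, k₁) then (1 : ℝ) else 0) else 0) =
        fun p => if p = (j₁, k₁) then (if u = i₁ ∧ m < k₁ then 1 else 0) else 0 := by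
      funext ⟨j', k'⟩
      simp only [Prod.mk.injEq]
      split_ifs <;> simp_all
    rw [if_pos rfl, hpoint, tsum_ite_eq]
    by_cases hu : u = i₁ <;> simp [hu]
  · simp [huv]

omit [Fintype E] in
theorem mk_Sop_deltaM (i₁ j₁ : E) (k₁ : ℕ) (u v : E) :
    mk (Sop (deltaM (i₁, j₁, k₁)) u v) =
      if u = v ∧ u = i₁ then (mk 1 : ℝ⟦X⟧) * (1 - X ^ k₁) else 0 := by
  rw [← mk_indicator_lt]
  ext m
  rw [coeff_mk, Sop_deltaM]
  split_ifs <;> simp_all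

theorem mk_Cseq (q : E → E → ℕ → ℝ) (i j it jt : E) :
    mk (Cseq q i j it jt) =
      mk (psiOf q i it) * mk (psiOf q jt j) * ((mk 1 : ℝ⟦X⟧) * (1 - ∑ v, mk (q j v))) := by
  rw [Cseq, mk_sconv, mk_sconv, mk_one_sub_Hseq]

def Dseq (q : E → E → ℕ → ℝ) (i j it jt : E) (l : ℕ) : ℝ :=
  Cseq q i j it jt l - (if it = j then 1 else 0) * cumul (psiOf q i j) l

theorem mk_Dseq (q : E → E → ℕ → ℝ) (i j it jt : E) :
    mk (Dseq q i j it jt) =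
      mk (Cseq q i j it jt) - if it = j then mk (psiOf q i j) * (mk 1 : ℝ⟦X⟧) else 0 := by
  rw [← mk_cumul]
  ext l
  simp only [Dseq, coeff_mk, map_sub]
  split_ifs <;> simp

theorem IsSemiMarkovKernel.mk_FPm (hq : IsSemiMarkovKernel q) (i₁ j₁ : E) (k₁ : ℕ) (i j : E) :
    mk (FPm q (i₁, j₁, k₁) i j) =
      (X ^ k₁ : ℝ⟦X⟧) * mk (Dseq q i j i₁ j₁) +
        if i₁ = j then mk (psiOf q i j) * (mk 1 : ℝ⟦X⟧) else 0 := by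
  have hsplit : mk (FPm q (i₁, j₁, k₁) i j) =
      mk (mconv (mconv (mconv (psiOf q) (deltaM (i₁, j₁, k₁))) (psiOf q)) (Sop q) i j) +
        mk (mconv (psiOf q) (Sop (deltaM (i₁, j₁, k₁))) i j) := by
    ext
    simp [FPm]
  rw [hsplit]
  simp only [mk_mconv, hq.mk_Sop, mk_deltaM, mk_Sop_deltaM, mk_Dseq, mk_Cseq, mul_ite, mul_zero,
    ite_mul, zero_mul, ite_and, Finset.sum_ite_eq', Finset.mem_univ, if_true]
  obtain rfl | h := eq_or_ne i₁ j
  · simp only [if_true]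
    ring
  · simp only [h, h.symm, if_false]
    ring

theorem IsSemiMarkovKernel.mk_GPm (hq : IsSemiMarkovKernel q) (it i j : E) :
    mk (GPm q it i j) =
      ∑ jt, mk (q it jt) * mk (Dseq q i j it jt) +
        if it = j then mk (psiOf q i j) * (mk 1 : ℝ⟦X⟧) else 0 := by
  have hsplit : mk (GPm q it i j) =
      mk (mconv (mconv (mconv (psiOf q) (qres q it)) (psiOf q)) (Sop q) i j) +
        mk (mconv (psiOf q) (Sop (qres q it)) i j) := by
    ext
    simp [GPm]
  have hD : ∀ jt, mk (q it jt) * mk (Dseq q i j it jt) =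
      mk (psiOf q i it) * (mk (q it jt) * mk (psiOf q jt j)) *
          ((mk 1 : ℝ⟦X⟧) * (1 - ∑ v, mk (q j v))) -
        mk (q it jt) * if it = j then mk (psiOf q i j) * (mk 1 : ℝ⟦X⟧) else 0 := fun jt => by
    rw [mk_Dseq, mk_Cseq]
    ring
  rw [hsplit, Finset.sum_congr rfl fun jt _ => hD jt, Finset.sum_sub_distrib, ← Finset.sum_mul,
    ← Finset.sum_mul, ← Finset.mul_sum]
  simp only [mk_mconv, mk_Sop_qres, hq.mk_Sop, mk_qres, mul_ite, mul_zero, Finset.sum_ite_eq',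
    Finset.mem_univ, if_true, mul_assoc, ← Finset.mul_sum]
  split_ifs with h
  · subst h
    ring
  · ring

theorem IsSemiMarkovKernel.entry_FPm (hq : IsSemiMarkovKernel q) (et : E × E × ℕ) (i j : E)
    (k : ℕ) :
    entry (FPm q et) (i, j, k) =
      (if et.2.2 ≤ k then Dseq q i j et.1 et.2.1 (k - et.2.2) else 0) +
        (if et.1 = j then 1 else 0) * cumul (psiOf q i j) k := by
  obtain ⟨i₁, j₁, k₁⟩ := et
  rw [entry, ← coeff_mk k (FPm q _ i j), hq.mk_FPm, map_add, coeff_X_pow_mul', coeff_mk,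
    ← mk_cumul]
  split_ifs <;> simp

theorem IsSemiMarkovKernel.entry_GPm (hq : IsSemiMarkovKernel q) (it i j : E) (k : ℕ) :
    entry (GPm q it) (i, j, k) =
      ∑ jt, sconv (q it jt) (Dseq q i j it jt) k +
        (if it = j then 1 else 0) * cumul (psiOf q i j) k := by
  rw [entry, ← coeff_mk k (GPm q it i j), hq.mk_GPm, map_add, map_sum, ← mk_cumul]
  simp only [← sconv_eq_coeff]
  split_ifs <;> simp

theorem sum_sconv_Cseq_sub (q : E → E → ℕ → ℝ) (i j it : E) (k : ℕ) :
    ∑ jt, sconv (Cseq q i j it jt) (q it jt) k -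
        (if it = j then 1 else 0) * sconv (psiOf q i j) (Hseq q j) k =
      ∑ jt, sconv (q it jt) (Dseq q i j it jt) k := by
  simp only [sconv_eq_coeff, ← map_sum, mk_Dseq, mk_Hseq, mul_sub, Finset.sum_sub_distrib]
  split_ifs with h
  · subst h
    rw [← Finset.sum_mul, one_mul, ← map_sub]
    congr 2
    · exact Finset.sum_congr rfl fun jt _ => mul_comm _ _
    · ring
  · simp only [zero_mul, sub_zero, mul_zero, Finset.sum_const_zero]
    exact congrArg _ (Finset.sum_congr rfl fun jt _ => mul_comm _ _)

theorem vP_eq_sum_sconv_Dseq (q : E → E → ℕ → ℝ) (μr : E → ℝ) (i j : E) (k : ℕ) :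
    vP q μr i j k = ∑ it, μr it *
      (∑ jt, sconv (q it jt) (Dseq q i j it jt ^ 2) k -
        (∑ jt, sconv (q it jt) (Dseq q i j it jt) k) ^ 2) := by
  refine Finset.sum_congr rfl fun it _ => ?_
  rw [sum_sconv_Cseq_sub]
  congr 3
  funext jt
  rw [sconv_comm]
  rfl

theorem IsSemiMarkovKernel.VP_diag_eq_sum_sconv_Dseq (hq : IsSemiMarkovKernel q)
    (μr : E → ℝ) (i j : E) (k : ℕ) :
    VP q μr (i, j, k) (i, j, k) = ∑ it, μr it *
      (∑ jt, sconv (q it jt) (Dseq q i j it jt ^ 2) k -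
        (∑ jt, sconv (q it jt) (Dseq q i j it jt) k) ^ 2) := by
  set A : E × E × ℕ → ℝ := fun et =>
    if et.2.2 ≤ k then Dseq q i j et.1 et.2.1 (k - et.2.2) else 0
  set b : E → ℝ := fun it => (if it = j then 1 else 0) * cumul (psiOf q i j) k
  set m : E → ℝ := fun it => ∑ jt, sconv (q it jt) (Dseq q i j it jt) k
  set s : E → ℝ := fun it => ∑ jt, sconv (q it jt) (Dseq q i j it jt ^ 2) k
  have hm : ∀ it, HasSum (fun p : E × ℕ => q it p.1 p.2 * A (it, p)) (m it) := fun it =>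
    hasSum_prod_of_fintype fun jt => hasSum_mul_ite_le _ _ k
  have hs : ∀ it, HasSum (fun p : E × ℕ => q it p.1 p.2 * A (it, p) ^ 2) (s it) := fun it =>
    hasSum_prod_of_fintype fun jt => (hasSum_mul_ite_le _ _ k).congr_fun fun k₁ => by
      simp only [A]
      split_ifs <;> simp
  have htotal : HasSum
      (fun et => μr et.1 * entry q et * (entry (FPm q et) (i, j, k) * entry (FPm q et) (i, j, k)))
      (∑ it, μr it * (s it + 2 * b it * m it + b it ^ 2)) :=
    hasSum_prod_of_fintype fun it =>
      ((hasSum_mul_add_sq (hq.2.2 it) (hm it) (hs it) (b it)).mul_left (μr it)).congr_fun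
        fun p => by
          rw [hq.entry_FPm]
          simp only [entry, A, b]
          ring
  rw [VP, htotal.tsum_eq, ← Finset.sum_sub_distrib]
  refine Finset.sum_congr rfl fun it _ => ?_
  rw [hq.entry_GPm]
  ring

end Kernel

theorem statement18_general (q : E → E → ℕ → ℝ) (hq : IsSemiMarkovKernel q)
    (μr : E → ℝ) (i j : E) (k : ℕ) :
    VP q μr (i, j, k) (i, j, k) = vP q μr i j k := by
  rw [hq.VP_diag_eq_sum_sconv_Dseq, vP_eq_sum_sconv_Dseq]

/-- The diagonal entries of `V^P` coincide with the one-dimensional asymptotic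
variance `v^P` (Appendix A.2 of the paper). -/
theorem statement18 (q : E → E → ℕ → ℝ) (hq : IsSemiMarkovKernel q)
    (μr : E → ℝ) (hμr : ∀ i, 0 ≤ μr i) (i j : E) (k : ℕ) :
    VP q μr (i, j, k) (i, j, k) = vP q μr i j k :=
  statement18_general q hq μr i j k

end SMCPaper
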